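/- arXiv:0806.4850 — 3 statements merged into one kernel-verified Lean document; each statement's English description precedes it below -/
import Mathlib

section
/- (Dyadic decomposition estimate) Let μ be a positive Borel measure on a space X, let φ : X → (-∞, 0) be measurable, and suppose that for every Borel set B, μ(B) ≤ (sup_B |φ|)ⁿ · Cap(B) where Cap is a monotone set function. Then there is a constant C depending only on n such that for every Borel set K, μ(K) ≤ C ∫₀^∞ s^{n-1} Cap(K ∩ {φ ≤ -s}) ds. -/
/-!
Cut `K` into the dyadic shells `{2 ^ (j + 1) < -φ ≤ 2 ^ (j + 2)}`. On such a shell the hypothesis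
bounds `μ` by `(2 ^ (j + 2)) ^ n * Cap (K ∩ {φ ≤ -2 ^ (j + 1)})`, while, since
`s ↦ Cap (K ∩ {φ ≤ -s})` is antitone, the integral of
`s ^ (n - 1) * Cap (K ∩ {φ ≤ -s})` over `(2 ^ j, 2 ^ (j + 1)]` is at least `(2 ^ j) ^ n`
times the same capacity. Summing over `j ∈ ℤ` gives the estimate with `C = 4 ^ n`.
-/

open Set MeasureTheory ENNReal

section Dyadic

variable {α : Type*} [Semifield α] [LinearOrder α] [IsStrictOrderedRing α] {b : α}

theorem iUnion_Ioc_zpow [Archimedean α] [ExistsAddOfLE α] (hb : 1 < b) :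
    ⋃ j : ℤ, Ioc (b ^ j) (b ^ (j + 1)) = Ioi 0 := by
  refine Subset.antisymm
    (iUnion_subset fun j x hx => (zpow_pos (zero_lt_one.trans hb) j).trans hx.1)
    fun x hx => mem_iUnion.2 (exists_mem_Ioc_zpow hx hb)

theorem pairwise_disjoint_Ioc_zpow₀ (hb : 1 < b) :
    Pairwise (Function.onFun Disjoint fun j : ℤ => Ioc (b ^ j) (b ^ (j + 1))) := by
  intro i j hij
  refine Set.disjoint_left.2 fun x hi hj => hij ?_
  have h₁ : i < j + 1 := (zpow_lt_zpow_iff_right₀ hb).1 (hi.1.trans_le hj.2)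
  have h₂ : j < i + 1 := (zpow_lt_zpow_iff_right₀ hb).1 (hj.1.trans_le hi.2)
  omega

end Dyadic

theorem lintegral_Ioi_zero_eq_tsum_dyadic (g : ℝ → ℝ≥0∞) :
    ∫⁻ s in Ioi 0, g s = ∑' j : ℤ, ∫⁻ s in Ioc (2 ^ j) (2 ^ (j + 1)), g s := by
  rw [← iUnion_Ioc_zpow one_lt_two,
    lintegral_iUnion (fun _ => measurableSet_Ioc) (pairwise_disjoint_Ioc_zpow₀ one_lt_two)]

theorem ofReal_sub_mul_pow_mul_le_setLIntegral_Ioc {ψ : ℝ → ℝ≥0∞} (hψ : Antitone ψ)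
    {a : ℝ} (ha : 0 ≤ a) (b : ℝ) (m : ℕ) :
    ENNReal.ofReal (b - a) * ENNReal.ofReal (a ^ m) * ψ b ≤
      ∫⁻ s in Ioc a b, ENNReal.ofReal (s ^ m) * ψ s := by
  calc ENNReal.ofReal (b - a) * ENNReal.ofReal (a ^ m) * ψ b
      = ∫⁻ _ in Ioc a b, ENNReal.ofReal (a ^ m) * ψ b := by
        rw [setLIntegral_const, Real.volume_Ioc]; ring
    _ ≤ ∫⁻ s in Ioc a b, ENNReal.ofReal (s ^ m) * ψ s :=
        setLIntegral_mono' measurableSet_Ioc fun s hs =>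
          mul_le_mul' (ENNReal.ofReal_le_ofReal (pow_le_pow_left₀ ha hs.1.le m)) (hψ hs.2)

section Capacity

variable {X : Type*} {φ : X → ℝ} {Cap : Set X → ℝ≥0∞}

theorem antitone_cap_inter_sublevel (hCap : Monotone Cap) (K : Set X) :
    Antitone fun s : ℝ => Cap (K ∩ {x | φ x ≤ -s}) :=
  fun s t hst => hCap <|
    inter_subset_inter_right K fun x (hx : φ x ≤ -t) => show φ x ≤ -s by linarith

variable [MeasurableSpace X] {μ : Measure X}

theorem measure_inter_preimage_neg_Ioc_le {n : ℕ} (hφ : Measurable φ) (hCap : Monotone Cap)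
    (hcomp : ∀ B : Set X, MeasurableSet B →
      μ B ≤ (⨆ x ∈ B, ENNReal.ofReal (-φ x)) ^ n * Cap B)
    {K : Set X} (hK : MeasurableSet K) (a b : ℝ) :
    μ (K ∩ (-φ) ⁻¹' Ioc a b) ≤ ENNReal.ofReal b ^ n * Cap (K ∩ {x | φ x ≤ -a}) := by
  refine (hcomp _ (hK.inter (hφ.neg measurableSet_Ioc))).trans (mul_le_mul' ?_ (hCap ?_))
  · exact pow_le_pow_left' (iSup₂_le fun x hx => ENNReal.ofReal_le_ofReal hx.2.2) n
  · rintro x ⟨hxK, hx, -⟩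
    exact ⟨hxK, show φ x ≤ -a by simp only [Pi.neg_apply] at hx; linarith⟩

theorem measure_inter_preimage_neg_Ioc_zpow_le (hφ : Measurable φ) (hCap : Monotone Cap) {m : ℕ}
    (hcomp : ∀ B : Set X, MeasurableSet B →
      μ B ≤ (⨆ x ∈ B, ENNReal.ofReal (-φ x)) ^ (m + 1) * Cap B)
    {K : Set X} (hK : MeasurableSet K) (j : ℤ) :
    μ (K ∩ (-φ) ⁻¹' Ioc (2 ^ (j + 1)) (2 ^ (j + 1 + 1))) ≤
      4 ^ (m + 1) * ∫⁻ s in Ioc (2 ^ j) (2 ^ (j + 1)),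
        ENNReal.ofReal (s ^ m) * Cap (K ∩ {x | φ x ≤ -s}) := by
  set t : ℝ := 2 ^ j
  have ht : 0 ≤ t := by positivity
  have h₁ : (2 : ℝ) ^ (j + 1) = 2 * t := by rw [zpow_add_one₀ two_ne_zero, mul_comm]
  have h₂ : (2 : ℝ) ^ (j + 1 + 1) = 4 * t := by rw [zpow_add_one₀ two_ne_zero, h₁]; ring
  calc μ (K ∩ (-φ) ⁻¹' Ioc (2 ^ (j + 1)) (2 ^ (j + 1 + 1)))
      ≤ ENNReal.ofReal (4 * t) ^ (m + 1) * Cap (K ∩ {x | φ x ≤ -(2 * t)}) := by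
        simpa only [h₁, h₂] using measure_inter_preimage_neg_Ioc_le hφ hCap hcomp hK _ _
    _ = 4 ^ (m + 1) * (ENNReal.ofReal (2 * t - t) * ENNReal.ofReal (t ^ m) *
          Cap (K ∩ {x | φ x ≤ -(2 * t)})) := by
        rw [show 2 * t - t = t by ring, ENNReal.ofReal_mul (by norm_num), ENNReal.ofReal_pow ht,
          ENNReal.ofReal_ofNat]
        ring
    _ ≤ 4 ^ (m + 1) * ∫⁻ s in Ioc (2 ^ j) (2 ^ (j + 1)),
          ENNReal.ofReal (s ^ m) * Cap (K ∩ {x | φ x ≤ -s}) := by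
        rw [h₁]
        gcongr
        exact ofReal_sub_mul_pow_mul_le_setLIntegral_Ioc (antitone_cap_inter_sublevel hCap K) ht _ m

end Capacity

/-- Dyadic decomposition estimate: if μ(B) ≤ (sup_B |φ|)ⁿ·Cap(B)
for every Borel set B (φ < 0, Cap monotone), then there is C = C(n) with
μ(K) ≤ C ∫₀^∞ s^{n-1} Cap(K ∩ {φ ≤ -s}) ds for every Borel K. -/
theorem stmt3 {X : Type*} [MeasurableSpace X] (μ : Measure X)
    (φ : X → ℝ) (hφmeas : Measurable φ) (hφneg : ∀ x, φ x < 0)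
    (n : ℕ) (hn : 1 ≤ n)
    (Cap : Set X → ℝ≥0∞)
    (hCapMono : ∀ A B : Set X, A ⊆ B → Cap A ≤ Cap B)
    (hcomp : ∀ B : Set X, MeasurableSet B →
      μ B ≤ (⨆ x ∈ B, ENNReal.ofReal (-φ x)) ^ n * Cap B) :
    ∃ C : ℝ≥0∞, 0 < C ∧ C < ⊤ ∧ ∀ K : Set X, MeasurableSet K →
      μ K ≤ C * ∫⁻ s in Set.Ioi (0 : ℝ),
        ENNReal.ofReal (s ^ (n - 1)) * Cap (K ∩ {x | φ x ≤ -s}) := by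
  obtain ⟨m, rfl⟩ := Nat.exists_eq_add_one_of_ne_zero (by omega : n ≠ 0)
  refine ⟨4 ^ (m + 1), by positivity, pow_lt_top (by norm_num), fun K hK => ?_⟩
  let shell : ℤ → Set X := fun j => K ∩ (-φ) ⁻¹' Ioc (2 ^ j) (2 ^ (j + 1))
  have hcover : K ⊆ ⋃ j, shell j := fun x hx => by
    have : -φ x ∈ ⋃ j : ℤ, Ioc ((2 : ℝ) ^ j) (2 ^ (j + 1)) := by
      rw [iUnion_Ioc_zpow one_lt_two]; exact neg_pos.2 (hφneg x)
    obtain ⟨j, hj⟩ := mem_iUnion.1 this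
    exact mem_iUnion.2 ⟨j, hx, hj⟩
  calc μ K ≤ ∑' j, μ (shell j) := (measure_mono hcover).trans (measure_iUnion_le shell)
    _ = ∑' j, μ (shell (j + 1)) := ((Equiv.addRight 1).tsum_eq (fun j => μ (shell j))).symm
    _ ≤ ∑' j : ℤ, 4 ^ (m + 1) * ∫⁻ s in Ioc (2 ^ j) (2 ^ (j + 1)),
          ENNReal.ofReal (s ^ m) * Cap (K ∩ {x | φ x ≤ -s}) :=
        ENNReal.tsum_le_tsum fun j =>
          measure_inter_preimage_neg_Ioc_zpow_le hφmeas (fun A B => hCapMono A B) hcomp hK j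
    _ = 4 ^ (m + 1) * ∫⁻ s in Ioi 0,
          ENNReal.ofReal (s ^ (m + 1 - 1)) * Cap (K ∩ {x | φ x ≤ -s}) := by
        rw [ENNReal.tsum_mul_left, lintegral_Ioi_zero_eq_tsum_dyadic, Nat.add_sub_cancel]
end

section
/- Let c : (0,∞) → [0,∞] be a decreasing function such that for all s, t > 0, tⁿ c(s+t) ≤ M(s) ≤ sⁿ c(s), where M(s) := ∫_{{φ<-s}}(dd^c φ)ⁿ is some decreasing function M : (0,∞) → [0,∞]. Then limsup_{s→0} sⁿ c(s) < ∞ if and only if M(s) is bounded as s → 0, and in that case lim_{s→0} sⁿ c(s) = lim_{s→0} M(s) and lim_{s→∞} sⁿ c(s) = lim_{s→∞} M(s). -/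
open Set Filter ENNReal Topology

/-!
Splitting `s = (1 - r) s + r s` in the left inequality gives `rⁿ sⁿ c(s) ≤ M((1 - r) s)` for
`0 < r < 1`, while the right inequality gives `M(s) ≤ sⁿ c(s)`. Being antitone, `M` has
limits at `0⁺` and at `∞`, and these are not changed by rescaling `s`. Hence, at either end, the
corresponding limit `L` of `M` satisfies `L ≤ liminf sⁿ c(s)` and `rⁿ limsup sⁿ c(s) ≤ L`;
letting `r → 1`, `sⁿ c(s)` tends to `L` as well, and in particular the limsups at `0⁺` are equal.
-/

theorem AntitoneOn.exists_tendsto_atTop {β : Type*} [CompleteLinearOrder β] [TopologicalSpace β]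
    [OrderTopology β] {f : ℝ → β} {a : ℝ} (hf : AntitoneOn f (Ioi a)) :
    ∃ l, Tendsto f atTop (𝓝 l) := by
  have hanti : Antitone fun s => f (max s (a + 1)) := fun s t hst =>
    hf (by simp) (by simp) (max_le_max hst le_rfl)
  refine ⟨_, (tendsto_atTop_iInf hanti).congr' ?_⟩
  filter_upwards [eventually_ge_atTop (a + 1)] with s hs
  rw [max_eq_left hs]

theorem tendsto_const_mul_nhdsGT_zero {r : ℝ} (hr : 0 < r) :
    Tendsto (r * ·) (𝓝[>] 0) (𝓝[>] 0) :=
  tendsto_iff_comap.2 (comap_mulLeft_nhdsGT_zero hr).ge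

theorem ENNReal.le_of_forall_ofReal_pow_mul_le {x y : ℝ≥0∞} (n : ℕ)
    (h : ∀ r ∈ Ioo (0 : ℝ) 1, ENNReal.ofReal r ^ n * x ≤ y) : x ≤ y := by
  have hlim : Tendsto (fun r : ℝ => ENNReal.ofReal r ^ n * x) (𝓝[<] 1) (𝓝 x) := by
    have hpow : Tendsto (fun r : ℝ => ENNReal.ofReal r ^ n) (𝓝[<] 1) (𝓝 1) := by
      simpa using (ENNReal.Tendsto.pow (ENNReal.continuous_ofReal.tendsto 1)).mono_left
        nhdsWithin_le_nhds
    simpa using ENNReal.Tendsto.mul_const hpow (Or.inl one_ne_zero)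
  refine le_of_tendsto hlim ?_
  filter_upwards [Ioo_mem_nhdsLT (show (0 : ℝ) < 1 by norm_num)] with r hr using h r hr

section SandwichedMass

variable {n : ℕ} {c M : ℝ → ℝ≥0∞}

theorem ofReal_pow_mul_le_of_split
    (hleft : ∀ s t : ℝ, 0 < s → 0 < t → ENNReal.ofReal t ^ n * c (s + t) ≤ M s)
    {r s : ℝ} (hr : r ∈ Ioo (0 : ℝ) 1) (hs : 0 < s) :
    ENNReal.ofReal r ^ n * (ENNReal.ofReal s ^ n * c s) ≤ M ((1 - r) * s) := by
  have h := hleft ((1 - r) * s) (r * s) (mul_pos (sub_pos.2 hr.2) hs) (mul_pos hr.1 hs)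
  rwa [show (1 - r) * s + r * s = s by ring, ENNReal.ofReal_mul hr.1.le, mul_pow,
    mul_assoc] at h

theorem tendsto_ofReal_pow_mul_of_tendsto_comp_mul
    (hleft : ∀ s t : ℝ, 0 < s → 0 < t → ENNReal.ofReal t ^ n * c (s + t) ≤ M s)
    (hright : ∀ s : ℝ, 0 < s → M s ≤ ENNReal.ofReal s ^ n * c s)
    {F : Filter ℝ} [F.NeBot] {L : ℝ≥0∞} (hpos : ∀ᶠ s in F, 0 < s)
    (hscale : ∀ r : ℝ, 0 < r → Tendsto (fun s => M (r * s)) F (𝓝 L)) :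
    Tendsto (fun s => ENNReal.ofReal s ^ n * c s) F (𝓝 L) := by
  have hML : Tendsto M F (𝓝 L) := by simpa using hscale 1 one_pos
  refine tendsto_of_le_liminf_of_limsup_le ?_ ?_
  · rw [← hML.liminf_eq]
    exact liminf_le_liminf (hpos.mono hright)
  · refine ENNReal.le_of_forall_ofReal_pow_mul_le n fun r hr => ?_
    rw [← ENNReal.limsup_const_mul_of_ne_top (by simp), ← (hscale _ (sub_pos.2 hr.2)).limsup_eq]
    exact limsup_le_limsup (hpos.mono fun s hs => ofReal_pow_mul_le_of_split hleft hr hs)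

end SandwichedMass

theorem stmt4_general (n : ℕ) (c M : ℝ → ℝ≥0∞)
    (hM : AntitoneOn M (Set.Ioi (0 : ℝ)))
    (hleft : ∀ s t : ℝ, 0 < s → 0 < t →
      (ENNReal.ofReal t) ^ n * c (s + t) ≤ M s)
    (hright : ∀ s : ℝ, 0 < s → M s ≤ (ENNReal.ofReal s) ^ n * c s) :
    ((Filter.limsup (fun s : ℝ => (ENNReal.ofReal s) ^ n * c s) (𝓝[>] 0) ≠ ⊤)
        ↔ Filter.limsup M (𝓝[>] (0 : ℝ)) ≠ ⊤) ∧
      (Filter.limsup M (𝓝[>] (0 : ℝ)) ≠ ⊤ →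
        (∃ L : ℝ≥0∞,
          Tendsto (fun s : ℝ => (ENNReal.ofReal s) ^ n * c s) (𝓝[>] 0) (𝓝 L) ∧
          Tendsto M (𝓝[>] (0 : ℝ)) (𝓝 L)) ∧
        (∃ L' : ℝ≥0∞,
          Tendsto (fun s : ℝ => (ENNReal.ofReal s) ^ n * c s) atTop (𝓝 L') ∧
          Tendsto M atTop (𝓝 L'))) := by
  have hM₀ : Tendsto M (𝓝[>] 0) (𝓝 _) := hM.tendsto_nhdsGT (OrderTop.bddAbove _)
  obtain ⟨L', hM_atTop⟩ := hM.exists_tendsto_atTop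
  have hf₀ := tendsto_ofReal_pow_mul_of_tendsto_comp_mul hleft hright
    (self_mem_nhdsWithin : ∀ᶠ s in 𝓝[>] (0 : ℝ), 0 < s) fun r hr =>
      hM₀.comp (tendsto_const_mul_nhdsGT_zero hr)
  have hf_atTop := tendsto_ofReal_pow_mul_of_tendsto_comp_mul hleft hright
    (eventually_gt_atTop 0) fun r hr => hM_atTop.comp (tendsto_id.const_mul_atTop hr)
  exact ⟨by rw [hf₀.limsup_eq, hM₀.limsup_eq],
    fun _ => ⟨⟨_, hf₀, hM₀⟩, ⟨L', hf_atTop, hM_atTop⟩⟩⟩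

/-- If decreasing c, M : (0,∞) → [0,∞] satisfy
tⁿ c(s+t) ≤ M(s) ≤ sⁿ c(s) for all s,t > 0, then limsup_{s→0} sⁿc(s) < ∞ iff
M is bounded near 0, and in that case the limits as s → 0 agree, and the limits
as s → ∞ agree. -/
theorem stmt4 (n : ℕ) (hn : 1 ≤ n) (c M : ℝ → ℝ≥0∞)
    (hc : AntitoneOn c (Set.Ioi (0 : ℝ)))
    (hM : AntitoneOn M (Set.Ioi (0 : ℝ)))
    (hleft : ∀ s t : ℝ, 0 < s → 0 < t →
      (ENNReal.ofReal t) ^ n * c (s + t) ≤ M s)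
    (hright : ∀ s : ℝ, 0 < s → M s ≤ (ENNReal.ofReal s) ^ n * c s) :
    ((Filter.limsup (fun s : ℝ => (ENNReal.ofReal s) ^ n * c s) (𝓝[>] 0) ≠ ⊤)
        ↔ Filter.limsup M (𝓝[>] (0 : ℝ)) ≠ ⊤) ∧
      (Filter.limsup M (𝓝[>] (0 : ℝ)) ≠ ⊤ →
        (∃ L : ℝ≥0∞,
          Tendsto (fun s : ℝ => (ENNReal.ofReal s) ^ n * c s) (𝓝[>] 0) (𝓝 L) ∧
          Tendsto M (𝓝[>] (0 : ℝ)) (𝓝 L)) ∧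
        (∃ L' : ℝ≥0∞,
          Tendsto (fun s : ℝ => (ENNReal.ofReal s) ^ n * c s) atTop (𝓝 L') ∧
          Tendsto M atTop (𝓝 L'))) :=
  stmt4_general n c M hM hleft hright
end

section
/- Let χ : ℝ≤0 → ℝ≤0 be increasing, differentiable, and admissible in the sense that χ'(-2s) ≤ M χ'(-s) for all s > 0 and some constant M > 0. Let c : (0,∞) → [0,∞) be a decreasing function. Then ∫₀^∞ tⁿ χ'(-t) c(t) dt < ∞ if and only if ∫₀^∞ tⁿ χ'(-t) c(2t) dt < ∞. -/
/-!
Since `c` is decreasing, `c (2t) ≤ c t`, which gives one direction. For the other, substitute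
`t = 2s`: by admissibility the weight `w t = tⁿ χ'(-t)` satisfies `w (2s) ≤ 2ⁿ M w s`, hence
`∫ w(t) c(t) dt = 2 ∫ w(2s) c(2s) ds ≤ 2ⁿ⁺¹ M ∫ w(s) c(2s) ds`.
-/

open Set MeasureTheory ENNReal

theorem ENNReal.ofReal_mul_le_ofReal_mul_of_le {a b : ℝ} (ha : 0 ≤ a) (hab : a ≤ b) (x : ℝ) :
    ENNReal.ofReal (a * x) ≤ ENNReal.ofReal (b * x) := by
  rcases le_total 0 x with hx | hx
  · exact ENNReal.ofReal_le_ofReal (mul_le_mul_of_nonneg_right hab hx)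
  · rw [ENNReal.ofReal_of_nonpos (mul_nonpos_of_nonneg_of_nonpos ha hx)]
    exact zero_le

theorem ofReal_mul_setLIntegral_comp_mul_left_Ioi (g : ℝ → ℝ≥0∞) (a : ℝ) {b : ℝ} (hb : 0 < b) :
    ENNReal.ofReal b * ∫⁻ x in Ioi a, g (b * x) = ∫⁻ x in Ioi (b * a), g x := by
  have he : MeasurableEmbedding (b * ·) := (Homeomorph.mulLeft₀ b hb.ne').measurableEmbedding
  have hpre : (b * ·) ⁻¹' Ioi (b * a) = Ioi a := by
    rw [preimage_const_mul_Ioi₀ _ hb, mul_div_cancel_left₀ _ hb.ne']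
  rw [← hpre, ← he.lintegral_map, ← he.restrict_map, Real.map_volume_mul_left hb.ne',
    Measure.restrict_smul, lintegral_smul_measure, smul_eq_mul, ← mul_assoc,
    abs_of_pos (inv_pos.2 hb), ← ENNReal.ofReal_mul hb.le, mul_inv_cancel₀ hb.ne', ofReal_one,
    one_mul]

theorem setLIntegral_Ioi_le_of_doubling {w c : ℝ → ℝ} {K : ℝ} (hK : 0 ≤ K)
    (hw : ∀ t, 0 < t → 0 ≤ w t) (hdoubling : ∀ t, 0 < t → w (2 * t) ≤ K * w t) :
    ∫⁻ t in Ioi 0, ENNReal.ofReal (w t * c t) ≤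
      2 * ENNReal.ofReal K * ∫⁻ t in Ioi 0, ENNReal.ofReal (w t * c (2 * t)) := by
  have hscale := ofReal_mul_setLIntegral_comp_mul_left_Ioi
    (fun t ↦ ENNReal.ofReal (w t * c t)) 0 two_pos
  rw [mul_zero, ofReal_ofNat] at hscale
  rw [← hscale, mul_assoc, ← lintegral_const_mul' _ _ ofReal_ne_top]
  refine mul_le_mul_right (setLIntegral_mono' measurableSet_Ioi fun t (ht : 0 < t) ↦ ?_) _
  rw [← ENNReal.ofReal_mul hK, ← mul_assoc]
  exact ENNReal.ofReal_mul_le_ofReal_mul_of_le (hw _ (by positivity)) (hdoubling t ht) _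

theorem setLIntegral_Ioi_comp_two_mul_le {w c : ℝ → ℝ} (hw : ∀ t, 0 < t → 0 ≤ w t)
    (hc : AntitoneOn c (Ioi 0)) :
    ∫⁻ t in Ioi 0, ENNReal.ofReal (w t * c (2 * t)) ≤
      ∫⁻ t in Ioi 0, ENNReal.ofReal (w t * c t) := by
  refine setLIntegral_mono' measurableSet_Ioi fun t (ht : 0 < t) ↦ ?_
  refine ENNReal.ofReal_le_ofReal (mul_le_mul_of_nonneg_left ?_ (hw t ht))
  exact hc ht (mem_Ioi.2 (by positivity)) (by linarith)

theorem stmt7_general (n : ℕ) (χ : ℝ → ℝ)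
    (hχmono : Monotone χ)
    (M : ℝ) (hM : 0 < M)
    (hadm : ∀ s : ℝ, 0 < s → deriv χ (-(2 * s)) ≤ M * deriv χ (-s))
    (c : ℝ → ℝ) (hc : AntitoneOn c (Set.Ioi (0 : ℝ))) :
    (∫⁻ t in Set.Ioi (0 : ℝ),
        ENNReal.ofReal (t ^ n * deriv χ (-t) * c t)) < ⊤ ↔
      (∫⁻ t in Set.Ioi (0 : ℝ),
        ENNReal.ofReal (t ^ n * deriv χ (-t) * c (2 * t))) < ⊤ := by
  set w : ℝ → ℝ := fun t ↦ t ^ n * deriv χ (-t)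
  have hw : ∀ t, 0 < t → 0 ≤ w t := fun t ht ↦ mul_nonneg (pow_nonneg ht.le n) hχmono.deriv_nonneg
  have hdoubling : ∀ t, 0 < t → w (2 * t) ≤ 2 ^ n * M * w t := fun t ht ↦
    calc (2 * t) ^ n * deriv χ (-(2 * t)) ≤ (2 * t) ^ n * (M * deriv χ (-t)) := by
          gcongr; exact hadm t ht
      _ = 2 ^ n * M * w t := by ring
  refine ⟨fun h ↦ (setLIntegral_Ioi_comp_two_mul_le hw hc).trans_lt h, fun h ↦ ?_⟩
  refine (setLIntegral_Ioi_le_of_doubling (by positivity) hw hdoubling).trans_lt ?_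
  exact mul_lt_top (mul_lt_top ofNat_lt_top ofReal_lt_top) h

/-- For an increasing differentiable admissible weight χ
(χ'(-2s) ≤ M χ'(-s) for all s > 0) and decreasing c : (0,∞) → [0,∞),
∫₀^∞ tⁿ χ'(-t) c(t) dt < ∞ iff ∫₀^∞ tⁿ χ'(-t) c(2t) dt < ∞. -/
theorem stmt7 (n : ℕ) (hn : 1 ≤ n) (χ : ℝ → ℝ)
    (hχmono : Monotone χ) (hχdiff : Differentiable ℝ χ)
    (M : ℝ) (hM : 0 < M)
    (hadm : ∀ s : ℝ, 0 < s → deriv χ (-(2 * s)) ≤ M * deriv χ (-s))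
    (c : ℝ → ℝ) (hc : AntitoneOn c (Set.Ioi (0 : ℝ)))
    (hcnn : ∀ s : ℝ, 0 < s → 0 ≤ c s) :
    (∫⁻ t in Set.Ioi (0 : ℝ),
        ENNReal.ofReal (t ^ n * deriv χ (-t) * c t)) < ⊤ ↔
      (∫⁻ t in Set.Ioi (0 : ℝ),
        ENNReal.ofReal (t ^ n * deriv χ (-t) * c (2 * t))) < ⊤ :=
  stmt7_general n χ hχmono M hM hadm c hc
end
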